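/- Let n ≥ 2 and let A ⊆ ℝⁿ be a nonempty closed convex set. The following are equivalent: (i) A is spindle convex; (ii) A equals the intersection of all closed unit balls containing it, i.e. A = ⋂ {closed unit ball with center c : A ⊆ that ball} (where the intersection over the empty family is ℝⁿ), equivalently A = B[B[A]]; (iii) for every point x in the topological boundary of A there exists c ∈ ℝⁿ with A ⊆ {y : ‖y − c‖ ≤ 1} and ‖x − c‖ = 1 (a closed unit ball supporting A at x). -/

import Mathlib

noncomputable section

/-- `B[X]`: the intersection of all closed unit balls centered at points of `X`
(`Set.univ` when `X = ∅`). -/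
def ballInter {n : ℕ} (X : Set (EuclideanSpace ℝ (Fin n))) :
    Set (EuclideanSpace ℝ (Fin n)) :=
  ⋂ x ∈ X, Metric.closedBall x 1

/-- The closed spindle `[a,b]_s`: `B[B[{a,b}]]` if `dist a b ≤ 2`, all of the space
otherwise. -/
def spindle {n : ℕ} (a b : EuclideanSpace ℝ (Fin n)) :
    Set (EuclideanSpace ℝ (Fin n)) :=
  if dist a b ≤ 2 then ballInter (ballInter {a, b}) else Set.univ

/-- A set is spindle convex if it contains the closed spindle of any two of its points. -/
def SpindleConvex {n : ℕ} (C : Set (EuclideanSpace ℝ (Fin n))) : Prop :=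
  ∀ a ∈ C, ∀ b ∈ C, spindle a b ⊆ C

/-- The spindle convex hull: the intersection of all spindle convex sets containing `X`. -/
def spindleHull {n : ℕ} (X : Set (EuclideanSpace ℝ (Fin n))) :
    Set (EuclideanSpace ℝ (Fin n)) :=
  ⋂₀ {C : Set (EuclideanSpace ℝ (Fin n)) | X ⊆ C ∧ SpindleConvex C}

/-- Arc-distance `ρ(a,b) = 2 · arcsin(‖a - b‖ / 2)`. -/
def arcDist {n : ℕ} (a b : EuclideanSpace ℝ (Fin n)) : ℝ :=
  2 * Real.arcsin (dist a b / 2)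

/-!
Every intersection of unit balls is spindle convex, and `B[B[A]]` is the intersection of all unit
balls containing `A`. Conversely, a point `q ∉ A` is cut off from `A` by any unit ball that supports
`A` at the point `p ∈ A` nearest to `q` and whose centre lies on the far side of the supporting
hyperplane `H` of `A` at `p`. For spindle convex `A` the unit ball tangent to `H` at `p` works: if
some `x ∈ A` lay outside it, the spindle `[p, x]_s` would contain a small ball around a point of the
chord near `p` that crosses `H`. Under (iii) some unit ball supports `A` at `p`, and reflecting its
centre in `H` if necessary puts it on the correct side. Finally, at a boundary point `x` of
`B[B[A]]` the centre `c ∈ B[A]` farthest from `x` is at distance one, since otherwise a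
neighbourhood of `x` would lie in `B[B[A]]`.
-/

open Metric Set Filter Topology RealInnerProductSpace

section InnerProductSpace

variable {E : Type*} [NormedAddCommGroup E] [InnerProductSpace ℝ E]

theorem dist_lt_dist_of_inner_sub_nonpos {p q c : E} (hqp : q ≠ p)
    (h : ⟪q - p, c - p⟫ ≤ 0) : dist p c < dist q c := by
  have hq : 0 < ‖q - p‖ := norm_sub_pos_iff.2 hqp
  have key : ‖q - c‖ ^ 2 = ‖q - p‖ ^ 2 - 2 * ⟪q - p, c - p⟫ + ‖p - c‖ ^ 2 := by
    rw [← norm_sub_rev c p, ← norm_sub_sq_real, sub_sub_sub_cancel_right]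
  rw [dist_eq_norm, dist_eq_norm]
  exact lt_of_pow_lt_pow_left₀ 2 (norm_nonneg _) (by nlinarith)

theorem mem_frontier_of_forall_inner_sub_nonpos {A : Set E} {p u : E} (hp : p ∈ A) (hu : u ≠ 0)
    (h : ∀ w ∈ A, ⟪u, w - p⟫ ≤ 0) : p ∈ frontier A := by
  refine ⟨subset_closure hp, fun hint => ?_⟩
  have hlim : Tendsto (fun t : ℝ => p + t • u) (𝓝[>] 0) (𝓝 p) :=
    (Continuous.tendsto' (by fun_prop) 0 p (by simp)).mono_left nhdsWithin_le_nhds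
  obtain ⟨t, htA, ht⟩ :=
    ((hlim.eventually (mem_interior_iff_mem_nhds.1 hint)).and self_mem_nhdsWithin).exists
  have := h _ htA
  rw [add_sub_cancel_left, real_inner_smul_right, real_inner_self_eq_norm_sq] at this
  exact this.not_gt (mul_pos ht (pow_pos (norm_pos_iff.2 hu) 2))

theorem norm_sub_add_smul_sub_sq (c x y : E) (σ : ℝ) :
    ‖c - (x + σ • (y - x))‖ ^ 2 =
      (1 - σ) * ‖c - x‖ ^ 2 + σ * ‖c - y‖ ^ 2 - σ * (1 - σ) * ‖x - y‖ ^ 2 := by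
  have h1 : c - (x + σ • (y - x)) = (1 - σ) • (c - x) + σ • (c - y) := by module
  have h2 : ‖x - y‖ ^ 2 = ‖c - x‖ ^ 2 - 2 * ⟪c - x, c - y⟫ + ‖c - y‖ ^ 2 := by
    rw [← norm_sub_sq_real, sub_sub_sub_cancel_left, norm_sub_rev]
  rw [h1, h2, norm_add_sq_real, norm_smul, norm_smul, real_inner_smul_left, real_inner_smul_right]
  simp only [Real.norm_eq_abs, mul_pow, sq_abs]
  ring

theorem norm_sub_reflect_sq {p c u : E} (hu : ‖u‖ = 1) (x : E) :
    ‖x - (c - (2 * ⟪u, c - p⟫) • u)‖ ^ 2 = ‖x - c‖ ^ 2 + 4 * ⟪u, c - p⟫ * ⟪u, x - p⟫ := by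
  have h1 : x - (c - (2 * ⟪u, c - p⟫) • u) = (x - c) + (2 * ⟪u, c - p⟫) • u := by abel
  have h2 : ⟪x - c, u⟫ = ⟪u, x - p⟫ - ⟪u, c - p⟫ := by
    rw [real_inner_comm, ← inner_sub_right, sub_sub_sub_cancel_right]
  rw [h1, norm_add_sq_real, real_inner_smul_right, norm_smul, h2, hu, Real.norm_eq_abs,
    mul_one, sq_abs]
  ring

theorem exists_closedBall_dist_eq_one_inner_nonpos {A : Set E} {p c₀ u : E} (hu : ‖u‖ = 1)
    (hA : A ⊆ closedBall c₀ 1) (hp : dist p c₀ = 1) (hnormal : ∀ w ∈ A, ⟪u, w - p⟫ ≤ 0) :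
    ∃ c, A ⊆ closedBall c 1 ∧ dist p c = 1 ∧ ⟪u, c - p⟫ ≤ 0 := by
  rcases le_or_gt ⟪u, c₀ - p⟫ 0 with hh | hh
  · exact ⟨c₀, hA, hp, hh⟩
  -- the mirror image of `c₀` in the supporting hyperplane at `p` is closer to every point of `A`
  refine ⟨c₀ - (2 * ⟪u, c₀ - p⟫) • u, fun w hw => ?_, ?_, ?_⟩
  · have hw₀ : ‖w - c₀‖ ≤ 1 := mem_closedBall_iff_norm.1 (hA hw)
    have := norm_sub_reflect_sq hu (p := p) (c := c₀) w
    rw [mem_closedBall_iff_norm, ← sq_le_one_iff₀ (norm_nonneg _), this]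
    nlinarith [mul_nonpos_of_nonneg_of_nonpos hh.le (hnormal w hw), norm_nonneg (w - c₀)]
  · have := norm_sub_reflect_sq hu (p := p) (c := c₀) p
    rw [sub_self, inner_zero_right, mul_zero, add_zero, ← dist_eq_norm, ← dist_eq_norm, hp] at this
    nlinarith [dist_nonneg (x := p) (y := c₀ - (2 * ⟪u, c₀ - p⟫) • u)]
  · rw [sub_right_comm, inner_sub_right, real_inner_smul_right, real_inner_self_eq_norm_sq, hu]
    linarith

end InnerProductSpace

section Spindle

variable {n : ℕ}

theorem mem_ballInter {X : Set (EuclideanSpace ℝ (Fin n))} {y : EuclideanSpace ℝ (Fin n)} :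
    y ∈ ballInter X ↔ ∀ x ∈ X, dist y x ≤ 1 := by
  simp only [ballInter, mem_iInter₂, mem_closedBall]

theorem mem_ballInter_iff_subset_closedBall {X : Set (EuclideanSpace ℝ (Fin n))}
    {c : EuclideanSpace ℝ (Fin n)} : c ∈ ballInter X ↔ X ⊆ closedBall c 1 := by
  simp only [mem_ballInter, subset_def, mem_closedBall, dist_comm c]

theorem biInter_closedBall_setOf_subset_closedBall (X : Set (EuclideanSpace ℝ (Fin n))) :
    ⋂ c ∈ {c : EuclideanSpace ℝ (Fin n) | X ⊆ closedBall c 1}, closedBall c 1 =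
      ballInter (ballInter X) := by
  simp only [← mem_ballInter_iff_subset_closedBall, ofPred_mem_eq]
  rfl

theorem subset_ballInter_ballInter (X : Set (EuclideanSpace ℝ (Fin n))) :
    X ⊆ ballInter (ballInter X) := fun x hx =>
  mem_ballInter.2 fun c hc => by rw [dist_comm]; exact mem_ballInter.1 hc x hx

theorem isCompact_ballInter {X : Set (EuclideanSpace ℝ (Fin n))} (hX : X.Nonempty) :
    IsCompact (ballInter X) :=
  (isCompact_closedBall hX.some 1).of_isClosed_subset
    (isClosed_biInter fun _ _ => isClosed_closedBall) (biInter_subset_of_mem hX.some_mem)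

theorem spindle_subset_closedBall {a b c : EuclideanSpace ℝ (Fin n)} (ha : dist a c ≤ 1)
    (hb : dist b c ≤ 1) : spindle a b ⊆ closedBall c 1 := by
  have hab : dist a b ≤ 2 := by linarith [dist_triangle_right a b c]
  rw [spindle, if_pos hab]
  refine fun z hz => mem_closedBall.2 (mem_ballInter.1 hz c (mem_ballInter.2 ?_))
  rintro x (rfl | rfl) <;> rwa [dist_comm]

theorem spindleConvex_ballInter (X : Set (EuclideanSpace ℝ (Fin n))) :
    SpindleConvex (ballInter X) := fun _ ha _ hb _ hz =>
  mem_ballInter.2 fun c hc =>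
    spindle_subset_closedBall (mem_ballInter.1 ha c hc) (mem_ballInter.1 hb c hc) hz

theorem exists_dist_eq_one_of_mem_frontier_ballInter {X : Set (EuclideanSpace ℝ (Fin n))}
    (hX : IsCompact X) {x : EuclideanSpace ℝ (Fin n)} (hx : x ∈ frontier (ballInter X)) :
    ∃ c ∈ X, dist x c = 1 := by
  rcases X.eq_empty_or_nonempty with rfl | hne
  · simp [ballInter] at hx
  obtain ⟨c, hc, hmax⟩ := hX.exists_isMaxOn hne (continuous_const.dist continuous_id).continuousOn
  have hxc : dist x c ≤ 1 :=
    mem_ballInter.1 ((isClosed_biInter fun _ _ => isClosed_closedBall).frontier_subset hx) c hc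
  refine ⟨c, hc, hxc.antisymm (not_lt.1 fun hlt => hx.2 ?_)⟩
  -- `c` is the farthest point of `X` from `x`, so a ball around `x` stays in `ballInter X`
  refine mem_interior.2 ⟨ball x (1 - dist x c), fun y hy => mem_ballInter.2 fun c' hc' => ?_,
    isOpen_ball, mem_ball_self (by linarith)⟩
  linarith [dist_triangle y x c', mem_ball.1 hy, show dist x c' ≤ dist x c from hmax hc']

theorem ballInter_pair_subset_closedBall (x y : EuclideanSpace ℝ (Fin n)) {σ : ℝ} (hσ₀ : 0 ≤ σ)
    (hσ₁ : σ ≤ 1) :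
    ballInter {x, y} ⊆ closedBall (x + σ • (y - x)) √(1 - σ * (1 - σ) * dist x y ^ 2) := by
  intro c hc
  have hx : ‖c - x‖ ^ 2 ≤ 1 :=
    pow_le_one₀ (norm_nonneg _) (dist_eq_norm c x ▸ mem_ballInter.1 hc x (by simp))
  have hy : ‖c - y‖ ^ 2 ≤ 1 :=
    pow_le_one₀ (norm_nonneg _) (dist_eq_norm c y ▸ mem_ballInter.1 hc y (by simp))
  rw [mem_closedBall, dist_eq_norm, ← abs_norm, dist_eq_norm]
  refine Real.abs_le_sqrt ?_
  rw [norm_sub_add_smul_sub_sq]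
  nlinarith

theorem closedBall_add_smul_sub_subset_spindle {x y : EuclideanSpace ℝ (Fin n)}
    (hxy : dist x y ≤ 2) {σ : ℝ} (hσ₀ : 0 ≤ σ) (hσ₁ : σ ≤ 1) :
    closedBall (x + σ • (y - x)) (1 - √(1 - σ * (1 - σ) * dist x y ^ 2)) ⊆ spindle x y := by
  rw [spindle, if_pos hxy]
  refine fun z hz => mem_ballInter.2 fun c hc => ?_
  have hc' := ballInter_pair_subset_closedBall x y hσ₀ hσ₁ hc
  rw [mem_closedBall] at hz hc'
  linarith [dist_triangle z (x + σ • (y - x)) c, dist_comm c (x + σ • (y - x))]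

theorem exists_mem_spindle_inner_sub_pos {p x u : EuclideanSpace ℝ (Fin n)} (hu : ‖u‖ = 1)
    (hpx : dist p x ≤ 2) (hx : ⟪u, x - p⟫ ≤ 0) (hout : 1 < dist x (p - u)) :
    ∃ z ∈ spindle p x, 0 < ⟪u, z - p⟫ := by
  set α := -⟪u, x - p⟫ with hα
  have hα₀ : 0 ≤ α := by linarith
  have hL : 2 * α < dist p x ^ 2 := by
    have h : ‖(x - p) + u‖ ^ 2 = dist p x ^ 2 - 2 * α + 1 := by
      rw [norm_add_sq_real, hu, dist_eq_norm', real_inner_comm, hα]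
      ring
    have h1 : 1 < ‖(x - p) + u‖ := by
      rwa [dist_eq_norm, sub_sub_eq_add_sub, add_sub_right_comm] at hout
    nlinarith
  have hL4 : dist p x ^ 2 ≤ 4 := by nlinarith [dist_nonneg (x := p) (y := x)]
  -- a small ball around a point of the chord near `p` pokes through the hyperplane `⟪u, · - p⟫ = 0`
  set σ := (dist p x ^ 2 - 2 * α) / 8 with hσ
  have hσ₀ : 0 < σ := by rw [hσ]; linarith
  set r := √(1 - σ * (1 - σ) * dist p x ^ 2) with hr_def
  have hr : r < 1 - σ * α := by
    have hσα₁ : σ * α < 1 := by nlinarith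
    have key : (1 - σ * α) ^ 2 - (1 - σ * (1 - σ) * dist p x ^ 2) =
        σ ^ 2 * (8 - dist p x ^ 2 + α ^ 2) := by
      rw [hσ]; ring
    rw [hr_def, Real.sqrt_lt' (by linarith)]
    nlinarith [pow_pos hσ₀ 2, sq_nonneg α]
  have hσα₀ : 0 ≤ σ * α := mul_nonneg hσ₀.le hα₀
  refine ⟨p + σ • (x - p) + (1 - r) • u,
    closedBall_add_smul_sub_subset_spindle hpx hσ₀.le (by linarith) ?_, ?_⟩
  · rw [mem_closedBall, dist_eq_norm, add_sub_cancel_left, norm_smul, hu, mul_one,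
      Real.norm_of_nonneg (by linarith)]
  · rw [add_assoc, add_sub_cancel_left, inner_add_right, real_inner_smul_right,
      real_inner_smul_right, real_inner_self_eq_norm_sq, hu, ← neg_neg ⟪u, x - p⟫, ← hα]
    nlinarith

theorem SpindleConvex.subset_closedBall_sub {A : Set (EuclideanSpace ℝ (Fin n))}
    (hA : SpindleConvex A) {p u : EuclideanSpace ℝ (Fin n)} (hp : p ∈ A) (hu : ‖u‖ = 1)
    (hnormal : ∀ w ∈ A, ⟪u, w - p⟫ ≤ 0) : A ⊆ closedBall (p - u) 1 := by
  intro x hx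
  by_contra hout
  rw [mem_closedBall, not_le] at hout
  by_cases hpx : dist p x ≤ 2
  · obtain ⟨z, hz, hzu⟩ := exists_mem_spindle_inner_sub_pos hu hpx (hnormal x hx) hout
    exact (hnormal z (hA p hp x hx hz)).not_gt hzu
  · have := hnormal (p + u) (hA p hp x hx (by rw [spindle, if_neg hpx]; trivial))
    rw [add_sub_cancel_left, real_inner_self_eq_norm_sq, hu] at this
    norm_num at this

theorem ballInter_ballInter_eq_of_supporting_closedBall {A : Set (EuclideanSpace ℝ (Fin n))}
    (hne : A.Nonempty) (hcl : IsClosed A) (hconv : Convex ℝ A)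
    (hsupp : ∀ p ∈ A, ∀ u, ‖u‖ = 1 → (∀ w ∈ A, ⟪u, w - p⟫ ≤ 0) →
      ∃ c, A ⊆ closedBall c 1 ∧ dist p c = 1 ∧ ⟪u, c - p⟫ ≤ 0) :
    ballInter (ballInter A) = A := by
  refine (subset_ballInter_ballInter A).antisymm' fun q hq => ?_
  by_contra hqA
  -- a unit ball supporting `A` at the nearest point `p` to `q`, on the side away from `q`,
  -- does not contain `q`
  obtain ⟨p, hpA, hmin⟩ := exists_norm_eq_iInf_of_complete_convex hne hcl.isComplete hconv q
  have hnormal := (norm_eq_iInf_iff_real_inner_le_zero hconv hpA).1 hmin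
  have hqp : q - p ≠ 0 := sub_ne_zero.2 (ne_of_mem_of_not_mem hpA hqA).symm
  have hscale : q - p = ‖q - p‖ • (‖q - p‖⁻¹ • (q - p)) := by
    rw [smul_smul, mul_inv_cancel₀ (norm_ne_zero_iff.2 hqp), one_smul]
  obtain ⟨c, hc, hpc, hcu⟩ := hsupp p hpA _ (norm_smul_inv_norm hqp) fun w hw => by
    rw [real_inner_smul_left]
    exact mul_nonpos_of_nonneg_of_nonpos (by positivity) (hnormal w hw)
  have hlt : dist p c < dist q c := by
    refine dist_lt_dist_of_inner_sub_nonpos (sub_ne_zero.1 hqp) ?_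
    rw [hscale, real_inner_smul_left]
    exact mul_nonpos_of_nonneg_of_nonpos (norm_nonneg _) hcu
  have hqc : dist q c ≤ 1 := mem_ballInter.1 hq c (mem_ballInter_iff_subset_closedBall.2 hc)
  linarith

end Spindle

theorem spindleConvex_tfae_general (n : ℕ)
    (A : Set (EuclideanSpace ℝ (Fin n))) (hne : A.Nonempty) (hcl : IsClosed A)
    (hconv : Convex ℝ A) :
    (SpindleConvex A ↔
      A = ⋂ c ∈ {c : EuclideanSpace ℝ (Fin n) | A ⊆ Metric.closedBall c 1},
        Metric.closedBall c 1) ∧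
    ((A = ⋂ c ∈ {c : EuclideanSpace ℝ (Fin n) | A ⊆ Metric.closedBall c 1},
        Metric.closedBall c 1) ↔
      ∀ x ∈ frontier A, ∃ c, A ⊆ Metric.closedBall c 1 ∧ dist x c = 1) := by
  rw [biInter_closedBall_setOf_subset_closedBall]
  refine ⟨⟨fun hA => ?_, fun h => h ▸ spindleConvex_ballInter _⟩, ⟨fun h x hx => ?_, fun h => ?_⟩⟩
  · refine (ballInter_ballInter_eq_of_supporting_closedBall hne hcl hconv
      fun p hp u hu hnormal => ⟨p - u, hA.subset_closedBall_sub hp hu hnormal, ?_, ?_⟩).symm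
    · rw [dist_eq_norm, sub_sub_cancel, hu]
    · rw [sub_sub_cancel_left, inner_neg_right, real_inner_self_eq_norm_sq, hu]
      norm_num
  · obtain ⟨c, hc, hxc⟩ :=
      exists_dist_eq_one_of_mem_frontier_ballInter (isCompact_ballInter hne) (h ▸ hx)
    exact ⟨c, mem_ballInter_iff_subset_closedBall.1 hc, hxc⟩
  · refine (ballInter_ballInter_eq_of_supporting_closedBall hne hcl hconv
      fun p hp u hu hnormal => ?_).symm
    have hpA : p ∈ frontier A :=
      mem_frontier_of_forall_inner_sub_nonpos hp (norm_ne_zero_iff.1 (by simp [hu])) hnormal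
    obtain ⟨c₀, hA, hpc₀⟩ := h p hpA
    exact exists_closedBall_dist_eq_one_inner_nonpos hu hA hpc₀ hnormal

theorem spindleConvex_tfae (n : ℕ) (hn : 2 ≤ n)
    (A : Set (EuclideanSpace ℝ (Fin n))) (hne : A.Nonempty) (hcl : IsClosed A)
    (hconv : Convex ℝ A) :
    (SpindleConvex A ↔
      A = ⋂ c ∈ {c : EuclideanSpace ℝ (Fin n) | A ⊆ Metric.closedBall c 1},
        Metric.closedBall c 1) ∧
    ((A = ⋂ c ∈ {c : EuclideanSpace ℝ (Fin n) | A ⊆ Metric.closedBall c 1},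
        Metric.closedBall c 1) ↔
      ∀ x ∈ frontier A, ∃ c, A ⊆ Metric.closedBall c 1 ∧ dist x c = 1) :=
  spindleConvex_tfae_general n A hne hcl hconv
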